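/- arXiv:2401.00906 — 3 statements merged into one kernel-verified Lean document; each statement's English description precedes it below -/
import Mathlib

section
/- There exists a constant c₁ > 0 such that the function U(z,t) = c₁ (t² + (1+|z|²)²)^{−1/2} on ℝ³ is everywhere positive and satisfies −Δ_b U = U³ at every point of ℍ¹. -/
open scoped BigOperators
open MeasureTheory

noncomputable section

/-- The underlying space `ℝ^{2n+1}` of the Heisenberg group `ℍⁿ`,
with coordinates `(x, y, t)`. -/
abbrev Heis (n : ℕ) : Type := (Fin n → ℝ) × (Fin n → ℝ) × ℝ

/-- The Heisenberg group law `(z,t)·(w,s) = (z+w, t+s+2 Im (z ⬝ conj w))`. -/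
def Hmul {n : ℕ} (p q : Heis n) : Heis n :=
  (p.1 + q.1, p.2.1 + q.2.1,
    p.2.2 + q.2.2 + 2 * ∑ k, (p.2.1 k * q.1 k - p.1 k * q.2.1 k))

/-- Group inverse on the Heisenberg group. -/
def Hinv {n : ℕ} (p : Heis n) : Heis n := (-p.1, -p.2.1, -p.2.2)

/-- Heisenberg dilations `δ_λ(z,t) = (λz, λ²t)`. -/
def Hdil {n : ℕ} (lam : ℝ) (p : Heis n) : Heis n :=
  (lam • p.1, lam • p.2.1, lam ^ 2 * p.2.2)

/-- Coordinate vector of the horizontal field `X_k = ∂/∂x_k + 2 y_k ∂/∂t` at `p`. -/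
def XVec {n : ℕ} (k : Fin n) (p : Heis n) : Heis n := (Pi.single k 1, 0, 2 * p.2.1 k)

/-- Coordinate vector of the horizontal field `Y_k = ∂/∂y_k − 2 x_k ∂/∂t` at `p`. -/
def YVec {n : ℕ} (k : Fin n) (p : Heis n) : Heis n := (0, Pi.single k 1, -(2 * p.1 k))

/-- The horizontal derivative `X_k f`. -/
def Xd {n : ℕ} (k : Fin n) (f : Heis n → ℝ) (p : Heis n) : ℝ := fderiv ℝ f p (XVec k p)

/-- The horizontal derivative `Y_k f`. -/
def Yd {n : ℕ} (k : Fin n) (f : Heis n → ℝ) (p : Heis n) : ℝ := fderiv ℝ f p (YVec k p)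

/-- The sublaplacian `Δ_b = (1/4) ∑ (X_k² + Y_k²)`. -/
def subLap {n : ℕ} (f : Heis n → ℝ) (p : Heis n) : ℝ :=
  (1 / 4) * ∑ k : Fin n, (Xd k (Xd k f) p + Yd k (Yd k f) p)

/-- The Korányi norm `|(z,t)| = (|z|⁴ + t²)^{1/4}`. -/
def knorm {n : ℕ} (p : Heis n) : ℝ :=
  ((∑ k, (p.1 k ^ 2 + p.2.1 k ^ 2)) ^ 2 + p.2.2 ^ 2) ^ (1 / 4 : ℝ)

/-- The generator of dilations `Ξ = ∑ (x_k ∂/∂x_k + y_k ∂/∂y_k) + 2t ∂/∂t`, as a map. -/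
def XiVec {n : ℕ} (p : Heis n) : Heis n := (p.1, p.2.1, 2 * p.2.2)

/-- The derivative `Ξ f` along the generator of dilations. -/
def Xid {n : ℕ} (f : Heis n → ℝ) (p : Heis n) : ℝ := fderiv ℝ f p (XiVec p)

/-- The Jerison–Lee solution `U(z,t) = c₁ (t² + (1+|z|²)²)^{-1/2}` on `ℍ¹`. -/
def JL (c1 : ℝ) (p : Heis 1) : ℝ :=
  c1 * (p.2.2 ^ 2 + (1 + ∑ k, (p.1 k ^ 2 + p.2.1 k ^ 2)) ^ 2) ^ (-(1 / 2) : ℝ)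


/-- The subriemannian (horizontal) gradient, as an `ℝ^{2n+1}`-valued field. -/
def gradH {n : ℕ} (f : Heis n → ℝ) (p : Heis n) : Heis n :=
  (1 / 4 : ℝ) • ∑ k : Fin n, ((Xd k f p) • XVec k p + (Yd k f p) • YVec k p)

/-- The squared norm of the horizontal gradient, `|∇^H f|² = (1/4) ∑ ((X_k f)² + (Y_k f)²)`. -/
def normSqH {n : ℕ} (f : Heis n → ℝ) (p : Heis n) : ℝ :=
  (1 / 4) * ∑ k : Fin n, ((Xd k f p) ^ 2 + (Yd k f p) ^ 2)

end

noncomputable section JLaux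
open ContinuousLinearMap

/-- x-coordinate as a continuous linear map. -/
def Cx' : Heis 1 →L[ℝ] ℝ := (proj 0).comp (fst ℝ (Fin 1 → ℝ) ((Fin 1 → ℝ) × ℝ))
def Cy' : Heis 1 →L[ℝ] ℝ :=
  ((proj 0).comp (fst ℝ (Fin 1 → ℝ) ℝ)).comp (snd ℝ (Fin 1 → ℝ) ((Fin 1 → ℝ) × ℝ))
def Ct' : Heis 1 →L[ℝ] ℝ :=
  (snd ℝ (Fin 1 → ℝ) ℝ).comp (snd ℝ (Fin 1 → ℝ) ((Fin 1 → ℝ) × ℝ))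

def Fq (p : Heis 1) : ℝ := p.2.2 ^ 2 + (1 + (p.1 0 ^ 2 + p.2.1 0 ^ 2)) ^ 2

def Px (p : Heis 1) : ℝ := 4 * p.1 0 * (1 + (p.1 0 ^ 2 + p.2.1 0 ^ 2)) + 4 * p.2.1 0 * p.2.2
def Py (p : Heis 1) : ℝ := 4 * p.2.1 0 * (1 + (p.1 0 ^ 2 + p.2.1 0 ^ 2)) - 4 * p.1 0 * p.2.2

lemma Fq_pos (p : Heis 1) : 0 < Fq p := by
  have h1 : (0:ℝ) < 1 + (p.1 0 ^ 2 + p.2.1 0 ^ 2) := by positivity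
  unfold Fq; nlinarith [sq_nonneg p.2.2]

lemma hasFDerivAt_Fq (p : Heis 1) :
    HasFDerivAt Fq
      ((2 * p.2.2 ^ 1) • Ct' +
        (2 * (1 + (p.1 0 ^ 2 + p.2.1 0 ^ 2)) ^ 1) •
          ((2 * p.1 0 ^ 1) • Cx' + (2 * p.2.1 0 ^ 1) • Cy')) p := by
  have hx : HasFDerivAt (fun q : Heis 1 => q.1 0) Cx' p := Cx'.hasFDerivAt
  have hy : HasFDerivAt (fun q : Heis 1 => q.2.1 0) Cy' p := Cy'.hasFDerivAt
  have ht : HasFDerivAt (fun q : Heis 1 => q.2.2) Ct' p := Ct'.hasFDerivAt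
  have ht2 := (hasDerivAt_pow 2 (p.2.2)).comp_hasFDerivAt p ht
  have hx2 := (hasDerivAt_pow 2 (p.1 0)).comp_hasFDerivAt p hx
  have hy2 := (hasDerivAt_pow 2 (p.2.1 0)).comp_hasFDerivAt p hy
  have hr : HasFDerivAt (fun q : Heis 1 => 1 + (q.1 0 ^ 2 + q.2.1 0 ^ 2))
      ((2 * p.1 0 ^ 1) • Cx' + (2 * p.2.1 0 ^ 1) • Cy') p := (hx2.add hy2).const_add 1
  have hr2 := (hasDerivAt_pow 2 (1 + (p.1 0 ^ 2 + p.2.1 0 ^ 2))).comp_hasFDerivAt p hr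
  exact ht2.add hr2

lemma JL_one_eq : JL 1 = fun q : Heis 1 => Fq q ^ (-(1/2) : ℝ) := by
  funext q
  simp [JL, Fq, Fin.sum_univ_one]

lemma fderiv_U_apply (p v : Heis 1) :
    fderiv ℝ (fun q : Heis 1 => Fq q ^ (-(1/2) : ℝ)) p v =
      (-(1/2)) * Fq p ^ (-(3/2) : ℝ) *
        (2 * p.2.2 * v.2.2 +
          2 * (1 + (p.1 0 ^ 2 + p.2.1 0 ^ 2)) * (2 * p.1 0 * v.1 0 + 2 * p.2.1 0 * v.2.1 0)) := by
  have h := (hasFDerivAt_Fq p).rpow_const (p := (-(1/2) : ℝ)) (Or.inl (Fq_pos p).ne')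
  rw [h.fderiv]
  have he : (-(1/2) : ℝ) - 1 = -(3/2) := by norm_num
  simp only [he, ContinuousLinearMap.smul_apply, ContinuousLinearMap.add_apply,
    ContinuousLinearMap.comp_apply, smul_eq_mul]
  have h1 : Cx' v = v.1 0 := rfl
  have h2 : Cy' v = v.2.1 0 := rfl
  have h3 : Ct' v = v.2.2 := rfl
  rw [h1, h2, h3]; ring

lemma Xd_JL_eq : Xd 0 (JL 1) = fun p : Heis 1 => -(1/2) * Fq p ^ (-(3/2) : ℝ) * Px p := by
  funext p
  rw [JL_one_eq]
  show fderiv ℝ (fun q : Heis 1 => Fq q ^ (-(1/2) : ℝ)) p (XVec 0 p) = _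
  rw [fderiv_U_apply]
  have h1 : (XVec 0 p).1 0 = 1 := by simp [XVec]
  have h2 : (XVec 0 p).2.1 0 = 0 := by simp [XVec]
  have h3 : (XVec 0 p).2.2 = 2 * p.2.1 0 := rfl
  rw [h1, h2, h3]; unfold Px; ring

lemma Yd_JL_eq : Yd 0 (JL 1) = fun p : Heis 1 => -(1/2) * Fq p ^ (-(3/2) : ℝ) * Py p := by
  funext p
  rw [JL_one_eq]
  show fderiv ℝ (fun q : Heis 1 => Fq q ^ (-(1/2) : ℝ)) p (YVec 0 p) = _
  rw [fderiv_U_apply]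
  have h1 : (YVec 0 p).1 0 = 0 := by simp [YVec]
  have h2 : (YVec 0 p).2.1 0 = 1 := by simp [YVec]
  have h3 : (YVec 0 p).2.2 = -(2 * p.1 0) := rfl
  rw [h1, h2, h3]; unfold Py; ring

lemma hasFDerivAt_Px (p : Heis 1) :
    HasFDerivAt Px
      (((4 * p.1 0) • ((2 * p.1 0 ^ 1) • Cx' + (2 * p.2.1 0 ^ 1) • Cy') +
          (1 + (p.1 0 ^ 2 + p.2.1 0 ^ 2)) • ((4:ℝ) • Cx')) +
        ((4 * p.2.1 0) • Ct' + p.2.2 • ((4:ℝ) • Cy'))) p := by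
  have hx : HasFDerivAt (fun q : Heis 1 => q.1 0) Cx' p := Cx'.hasFDerivAt
  have hy : HasFDerivAt (fun q : Heis 1 => q.2.1 0) Cy' p := Cy'.hasFDerivAt
  have ht : HasFDerivAt (fun q : Heis 1 => q.2.2) Ct' p := Ct'.hasFDerivAt
  have hx2 := (hasDerivAt_pow 2 (p.1 0)).comp_hasFDerivAt p hx
  have hy2 := (hasDerivAt_pow 2 (p.2.1 0)).comp_hasFDerivAt p hy
  have hr : HasFDerivAt (fun q : Heis 1 => 1 + (q.1 0 ^ 2 + q.2.1 0 ^ 2))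
      ((2 * p.1 0 ^ 1) • Cx' + (2 * p.2.1 0 ^ 1) • Cy') p := (hx2.add hy2).const_add 1
  exact ((hx.const_mul 4).mul hr).add ((hy.const_mul 4).mul ht)

lemma hasFDerivAt_Py (p : Heis 1) :
    HasFDerivAt Py
      (((4 * p.2.1 0) • ((2 * p.1 0 ^ 1) • Cx' + (2 * p.2.1 0 ^ 1) • Cy') +
          (1 + (p.1 0 ^ 2 + p.2.1 0 ^ 2)) • ((4:ℝ) • Cy')) -
        ((4 * p.1 0) • Ct' + p.2.2 • ((4:ℝ) • Cx'))) p := by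
  have hx : HasFDerivAt (fun q : Heis 1 => q.1 0) Cx' p := Cx'.hasFDerivAt
  have hy : HasFDerivAt (fun q : Heis 1 => q.2.1 0) Cy' p := Cy'.hasFDerivAt
  have ht : HasFDerivAt (fun q : Heis 1 => q.2.2) Ct' p := Ct'.hasFDerivAt
  have hx2 := (hasDerivAt_pow 2 (p.1 0)).comp_hasFDerivAt p hx
  have hy2 := (hasDerivAt_pow 2 (p.2.1 0)).comp_hasFDerivAt p hy
  have hr : HasFDerivAt (fun q : Heis 1 => 1 + (q.1 0 ^ 2 + q.2.1 0 ^ 2))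
      ((2 * p.1 0 ^ 1) • Cx' + (2 * p.2.1 0 ^ 1) • Cy') p := (hx2.add hy2).const_add 1
  exact ((hy.const_mul 4).mul hr).sub ((hx.const_mul 4).mul ht)

/-- Directional derivative of `G = -(1/2) Fq^{-3/2} · P` where `P` has derivative `DP`. -/
lemma fderiv_G_apply (P : Heis 1 → ℝ) (DP : Heis 1 →L[ℝ] ℝ) (p v : Heis 1)
    (hP : HasFDerivAt P DP p) :
    fderiv ℝ (fun q : Heis 1 => -(1/2) * Fq q ^ (-(3/2) : ℝ) * P q) p v =
      -(1/2) * ((-(3/2)) * Fq p ^ ((-(3/2) : ℝ) - 1) *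
          (2 * p.2.2 * v.2.2 +
            2 * (1 + (p.1 0 ^ 2 + p.2.1 0 ^ 2)) * (2 * p.1 0 * v.1 0 + 2 * p.2.1 0 * v.2.1 0)) *
          P p +
        Fq p ^ (-(3/2) : ℝ) * DP v) := by
  have hB := (hasFDerivAt_Fq p).rpow_const (p := (-(3/2) : ℝ)) (Or.inl (Fq_pos p).ne')
  have hG : HasFDerivAt (fun q : Heis 1 => -(1/2) * Fq q ^ (-(3/2) : ℝ) * P q) _ p :=
    (hB.const_mul (-(1/2) : ℝ)).mul hP
  rw [hG.fderiv]
  simp only [ContinuousLinearMap.smul_apply, ContinuousLinearMap.add_apply,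
    ContinuousLinearMap.comp_apply, smul_eq_mul, ContinuousLinearMap.coe_smul',
    Pi.smul_apply]
  have h1 : Cx' v = v.1 0 := rfl
  have h2 : Cy' v = v.2.1 0 := rfl
  have h3 : Ct' v = v.2.2 := rfl
  rw [h1, h2, h3]; ring

end JLaux

/-- There is a constant `c₁ > 0` for which the Jerison–Lee function
`U(z,t) = c₁ (t² + (1+|z|²)²)^{−1/2}` is positive and satisfies `−Δ_b U = U³` on `ℍ¹`. -/
theorem jerison_lee_solution_exists :
    ∃ c1 : ℝ, 0 < c1 ∧ (∀ p : Heis 1, 0 < JL c1 p) ∧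
      ∀ p : Heis 1, -subLap (JL c1) p = (JL c1 p) ^ 3 := by
  refine ⟨1, one_pos, ?_, ?_⟩
  · intro p
    rw [JL_one_eq]
    exact Real.rpow_pos_of_pos (Fq_pos p) _
  · intro p
    set x := p.1 0 with hxdef
    set y := p.2.1 0 with hydef
    set t := p.2.2 with htdef
    have hs := Fq_pos p
    -- second X derivative
    have hXX : Xd 0 (Xd 0 (JL 1)) p =
        -(1/2) * ((-(3/2)) * Fq p ^ ((-(3/2) : ℝ) - 1) *
            (2 * t * (2 * y) + 2 * (1 + (x ^ 2 + y ^ 2)) * (2 * x * 1 + 2 * y * 0)) * Px p +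
          Fq p ^ (-(3/2) : ℝ) *
            ((4 * x) * (2 * x ^ 1 * 1 + 2 * y ^ 1 * 0) + (1 + (x ^ 2 + y ^ 2)) * (4 * 1) +
              ((4 * y) * (2 * y) + t * (4 * 0)))) := by
      rw [Xd_JL_eq]
      show fderiv ℝ (fun q : Heis 1 => -(1/2) * Fq q ^ (-(3/2) : ℝ) * Px q) p (XVec 0 p) = _
      rw [fderiv_G_apply Px _ p (XVec 0 p) (hasFDerivAt_Px p)]
      have h1 : (XVec 0 p).1 0 = 1 := by simp [XVec]
      have h2 : (XVec 0 p).2.1 0 = 0 := by simp [XVec]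
      have h3 : (XVec 0 p).2.2 = 2 * y := rfl
      simp only [ContinuousLinearMap.add_apply, ContinuousLinearMap.smul_apply,
        smul_eq_mul, h1, h2, h3]
      have g1 : Cx' (XVec 0 p) = 1 := h1
      have g2 : Cy' (XVec 0 p) = 0 := h2
      have g3 : Ct' (XVec 0 p) = 2 * y := h3
      rw [g1, g2, g3]
    have hYY : Yd 0 (Yd 0 (JL 1)) p =
        -(1/2) * ((-(3/2)) * Fq p ^ ((-(3/2) : ℝ) - 1) *
            (2 * t * (-(2 * x)) + 2 * (1 + (x ^ 2 + y ^ 2)) * (2 * x * 0 + 2 * y * 1)) * Py p +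
          Fq p ^ (-(3/2) : ℝ) *
            ((4 * y) * (2 * x ^ 1 * 0 + 2 * y ^ 1 * 1) + (1 + (x ^ 2 + y ^ 2)) * (4 * 1) -
              ((4 * x) * (-(2 * x)) + t * (4 * 0)))) := by
      rw [Yd_JL_eq]
      show fderiv ℝ (fun q : Heis 1 => -(1/2) * Fq q ^ (-(3/2) : ℝ) * Py q) p (YVec 0 p) = _
      rw [fderiv_G_apply Py _ p (YVec 0 p) (hasFDerivAt_Py p)]
      have h1 : (YVec 0 p).1 0 = 0 := by simp [YVec]
      have h2 : (YVec 0 p).2.1 0 = 1 := by simp [YVec]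
      have h3 : (YVec 0 p).2.2 = -(2 * x) := rfl
      simp only [ContinuousLinearMap.sub_apply, ContinuousLinearMap.add_apply,
        ContinuousLinearMap.smul_apply, smul_eq_mul, h1, h2, h3]
      have g1 : Cx' (YVec 0 p) = 0 := h1
      have g2 : Cy' (YVec 0 p) = 1 := h2
      have g3 : Ct' (YVec 0 p) = -(2 * x) := h3
      rw [g1, g2, g3]
    -- rpow algebra
    have hB1 : Fq p ^ ((-(3/2) : ℝ) - 1) = Fq p ^ (-(3/2) : ℝ) / Fq p :=
      Real.rpow_sub_one hs.ne' _
    have hU3 : JL 1 p ^ 3 = Fq p ^ (-(3/2) : ℝ) := by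
      rw [JL_one_eq]
      rw [← Real.rpow_natCast (Fq p ^ (-(1/2) : ℝ)) 3, ← Real.rpow_mul hs.le]
      norm_num
    have hsum : subLap (JL 1) p =
        (1/4) * (Xd 0 (Xd 0 (JL 1)) p + Yd 0 (Yd 0 (JL 1)) p) := by
      unfold subLap
      rw [Fin.sum_univ_one]
    rw [hsum, hXX, hYY, hU3, hB1]
    unfold Px Py Fq
    rw [← hxdef, ← hydef, ← htdef]
    field_simp
    ring
end

section
/- The function G(x) = |x|^{2−Q} = |x|^{−2n}, where |x| is the Korányi norm, satisfies Δ_b G = 0 at every point of ℝ^{2n+1} ∖ {0}. -/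
open scoped BigOperators
open MeasureTheory

noncomputable section Aux

variable {n : ℕ}

/-- `|z|² = ∑ (x_k² + y_k²)`. -/
def Sf (n : ℕ) (q : Heis n) : ℝ := ∑ k, (q.1 k ^ 2 + q.2.1 k ^ 2)

/-- `N = |z|⁴ + t²`, the fourth power of the Korányi norm. -/
def Nf (n : ℕ) (q : Heis n) : ℝ := Sf n q ^ 2 + q.2.2 ^ 2

def Lx (n : ℕ) (k : Fin n) : Heis n →L[ℝ] ℝ :=
  (ContinuousLinearMap.proj k).comp
    (ContinuousLinearMap.fst ℝ (Fin n → ℝ) ((Fin n → ℝ) × ℝ))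

def Ly (n : ℕ) (k : Fin n) : Heis n →L[ℝ] ℝ :=
  ((ContinuousLinearMap.proj k).comp
    (ContinuousLinearMap.fst ℝ (Fin n → ℝ) ℝ)).comp
    (ContinuousLinearMap.snd ℝ (Fin n → ℝ) ((Fin n → ℝ) × ℝ))

def Lt (n : ℕ) : Heis n →L[ℝ] ℝ :=
  (ContinuousLinearMap.snd ℝ (Fin n → ℝ) ℝ).comp
    (ContinuousLinearMap.snd ℝ (Fin n → ℝ) ((Fin n → ℝ) × ℝ))

@[simp] lemma Lx_apply (k : Fin n) (v : Heis n) : Lx n k v = v.1 k := rfl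
@[simp] lemma Ly_apply (k : Fin n) (v : Heis n) : Ly n k v = v.2.1 k := rfl
@[simp] lemma Lt_apply (v : Heis n) : Lt n v = v.2.2 := rfl

def S' (q : Heis n) : Heis n →L[ℝ] ℝ :=
  ∑ k, ((2 * q.1 k) • Lx n k + (2 * q.2.1 k) • Ly n k)

def N' (q : Heis n) : Heis n →L[ℝ] ℝ :=
  (2 * Sf n q) • S' q + (2 * q.2.2) • Lt n

lemma sq_fd {f : Heis n → ℝ} {L : Heis n →L[ℝ] ℝ} {q : Heis n}
    (h : HasFDerivAt f L q) :
    HasFDerivAt (fun x => f x ^ 2) ((2 * f q) • L) q := by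
  have h2 : HasFDerivAt (fun x => f x * f x) ((2 * f q) • L) q := by
    rw [two_mul, add_smul]
    exact h.mul h
  exact h2.congr_of_eventuallyEq
    (Filter.Eventually.of_forall fun y => pow_two (f y))

lemma hasS (q : Heis n) : HasFDerivAt (Sf n) (S' q) q := by
  apply HasFDerivAt.fun_sum
  intro k _
  exact (sq_fd ((Lx n k).hasFDerivAt (x := q))).add (sq_fd ((Ly n k).hasFDerivAt (x := q)))

lemma hasN (q : Heis n) : HasFDerivAt (Nf n) (N' q) q := by
  exact (sq_fd (hasS q)).add (sq_fd ((Lt n).hasFDerivAt (x := q)))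

lemma S'_X (q : Heis n) (k : Fin n) : S' q (XVec k q) = 2 * q.1 k := by
  simp [S', XVec, Pi.single_apply]

lemma S'_Y (q : Heis n) (k : Fin n) : S' q (YVec k q) = 2 * q.2.1 k := by
  simp [S', YVec, Pi.single_apply]

lemma N'_X (q : Heis n) (k : Fin n) :
    N' q (XVec k q) = 4 * (Sf n q * q.1 k + q.2.2 * q.2.1 k) := by
  simp only [N', ContinuousLinearMap.add_apply, ContinuousLinearMap.smul_apply,
    smul_eq_mul, S'_X, Lt_apply]
  simp only [XVec]
  ring

lemma N'_Y (q : Heis n) (k : Fin n) :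
    N' q (YVec k q) = 4 * (Sf n q * q.2.1 k - q.2.2 * q.1 k) := by
  simp only [N', ContinuousLinearMap.add_apply, ContinuousLinearMap.smul_apply,
    smul_eq_mul, S'_Y, Lt_apply]
  simp only [YVec]
  ring

/-- `G = N^c`. -/
def gfun (n : ℕ) (c : ℝ) (q : Heis n) : ℝ := Nf n q ^ c

lemma hasG (c : ℝ) (q : Heis n) (hq : Nf n q ≠ 0) :
    HasFDerivAt (gfun n c) ((c * Nf n q ^ (c - 1)) • N' q) q :=
  (hasN q).rpow_const (Or.inl hq)

def FX (n : ℕ) (c : ℝ) (k : Fin n) (q : Heis n) : ℝ :=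
  (c * Nf n q ^ (c - 1)) * (4 * (Sf n q * q.1 k + q.2.2 * q.2.1 k))

def FY (n : ℕ) (c : ℝ) (k : Fin n) (q : Heis n) : ℝ :=
  (c * Nf n q ^ (c - 1)) * (4 * (Sf n q * q.2.1 k - q.2.2 * q.1 k))

lemma Xd_g (c : ℝ) (k : Fin n) (q : Heis n) (hq : Nf n q ≠ 0) :
    Xd k (gfun n c) q = FX n c k q := by
  rw [Xd, (hasG c q hq).fderiv]
  simp [FX, N'_X]

lemma Yd_g (c : ℝ) (k : Fin n) (q : Heis n) (hq : Nf n q ≠ 0) :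
    Yd k (gfun n c) q = FY n c k q := by
  rw [Yd, (hasG c q hq).fderiv]
  simp [FY, N'_Y]

lemma contN : Continuous (Nf n) := by
  unfold Nf Sf
  fun_prop

lemma ev_ne (p : Heis n) (hp : Nf n p ≠ 0) : ∀ᶠ q in nhds p, Nf n q ≠ 0 :=
  contN.continuousAt.eventually_ne hp

lemma XXval (c : ℝ) (k : Fin n) (p : Heis n) (hp : Nf n p ≠ 0) :
    Xd k (Xd k (gfun n c)) p =
      16 * (c * (c - 1)) * Nf n p ^ (c - 2) * (Sf n p * p.1 k + p.2.2 * p.2.1 k) ^ 2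
        + 4 * c * (Nf n p ^ (c - 2) * Nf n p)
            * (Sf n p + 2 * p.1 k ^ 2 + 2 * p.2.1 k ^ 2) := by
  have hev : Xd k (gfun n c) =ᶠ[nhds p] FX n c k := by
    filter_upwards [ev_ne p hp] with q hq
    exact Xd_g c k q hq
  have h1 : HasFDerivAt (fun q : Heis n => c * Nf n q ^ (c - 1))
      (c • ((c - 1) * Nf n p ^ (c - 1 - 1)) • N' p) p :=
    (((hasN p).rpow_const (Or.inl hp))).const_mul c
  have h2 : HasFDerivAt (fun q : Heis n => 4 * (Sf n q * q.1 k + q.2.2 * q.2.1 k))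
      ((4 : ℝ) • ((Sf n p • Lx n k + p.1 k • S' p) + (p.2.2 • Ly n k + p.2.1 k • Lt n))) p := by
    exact (((hasS p).mul ((Lx n k).hasFDerivAt)).add
      (((Lt n).hasFDerivAt).mul ((Ly n k).hasFDerivAt))).const_mul 4
  have H : HasFDerivAt (FX n c k) _ p := h1.mul h2
  rw [Xd, hev.fderiv_eq, H.fderiv]
  have hc : Nf n p ^ (c - 1) = Nf n p ^ (c - 2) * Nf n p := by
    rw [show c - 1 = (c - 2) + 1 by ring, Real.rpow_add_one hp]
  simp only [ContinuousLinearMap.add_apply, ContinuousLinearMap.smul_apply, smul_eq_mul,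
    S'_X, N'_X, Lx_apply, Ly_apply, Lt_apply]
  simp only [XVec, Pi.single_eq_same, Pi.zero_apply]
  rw [show c - 1 - 1 = c - 2 by ring, hc]
  ring

lemma YYval (c : ℝ) (k : Fin n) (p : Heis n) (hp : Nf n p ≠ 0) :
    Yd k (Yd k (gfun n c)) p =
      16 * (c * (c - 1)) * Nf n p ^ (c - 2) * (Sf n p * p.2.1 k - p.2.2 * p.1 k) ^ 2
        + 4 * c * (Nf n p ^ (c - 2) * Nf n p)
            * (Sf n p + 2 * p.1 k ^ 2 + 2 * p.2.1 k ^ 2) := by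
  have hev : Yd k (gfun n c) =ᶠ[nhds p] FY n c k := by
    filter_upwards [ev_ne p hp] with q hq
    exact Yd_g c k q hq
  have h1 : HasFDerivAt (fun q : Heis n => c * Nf n q ^ (c - 1))
      (c • ((c - 1) * Nf n p ^ (c - 1 - 1)) • N' p) p :=
    (((hasN p).rpow_const (Or.inl hp))).const_mul c
  have h2 : HasFDerivAt (fun q : Heis n => 4 * (Sf n q * q.2.1 k - q.2.2 * q.1 k))
      ((4 : ℝ) • ((Sf n p • Ly n k + p.2.1 k • S' p) - (p.2.2 • Lx n k + p.1 k • Lt n))) p := by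
    exact (((hasS p).mul ((Ly n k).hasFDerivAt)).sub
      (((Lt n).hasFDerivAt).mul ((Lx n k).hasFDerivAt))).const_mul 4
  have H : HasFDerivAt (FY n c k) _ p := h1.mul h2
  rw [Yd, hev.fderiv_eq, H.fderiv]
  have hc : Nf n p ^ (c - 1) = Nf n p ^ (c - 2) * Nf n p := by
    rw [show c - 1 = (c - 2) + 1 by ring, Real.rpow_add_one hp]
  simp only [ContinuousLinearMap.add_apply, ContinuousLinearMap.sub_apply,
    ContinuousLinearMap.smul_apply, smul_eq_mul, S'_Y, N'_Y, Lx_apply, Ly_apply, Lt_apply]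
  simp only [YVec, Pi.single_eq_same, Pi.zero_apply]
  rw [show c - 1 - 1 = c - 2 by ring, hc]
  ring

lemma Nf_nonneg (q : Heis n) : 0 ≤ Nf n q :=
  add_nonneg (sq_nonneg _) (sq_nonneg _)

lemma Nf_pos (p : Heis n) (hp : p ≠ 0) : 0 < Nf n p := by
  rcases (Nf_nonneg p).lt_or_eq with h | h
  · exact h
  exfalso
  apply hp
  have hN : Sf n p ^ 2 + p.2.2 ^ 2 = 0 := h.symm
  have hS : Sf n p = 0 := by nlinarith [sq_nonneg (Sf n p), sq_nonneg p.2.2]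
  have ht : p.2.2 = 0 := by nlinarith [sq_nonneg (Sf n p), sq_nonneg p.2.2]
  have hS' : ∑ k : Fin n, (p.1 k ^ 2 + p.2.1 k ^ 2) = 0 := hS
  rw [Finset.sum_eq_zero_iff_of_nonneg (fun k _ => by positivity)] at hS'
  have hall : ∀ k : Fin n, p.1 k = 0 ∧ p.2.1 k = 0 := by
    intro k
    have h1 := hS' k (Finset.mem_univ k)
    constructor
    · have : p.1 k ^ 2 = 0 := by nlinarith [sq_nonneg (p.1 k), sq_nonneg (p.2.1 k)]
      exact pow_eq_zero_iff two_ne_zero |>.mp this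
    · have : p.2.1 k ^ 2 = 0 := by nlinarith [sq_nonneg (p.1 k), sq_nonneg (p.2.1 k)]
      exact pow_eq_zero_iff two_ne_zero |>.mp this
  have hx : p.1 = 0 := by funext k; exact (hall k).1
  have hy : p.2.1 = 0 := by funext k; exact (hall k).2
  exact Prod.ext hx (Prod.ext hy ht)

end Aux

/-- The function `G(x) = |x|^{2−Q} = |x|^{−2n}` (Korányi norm) satisfies `Δ_b G = 0`
away from the origin. -/
theorem koranyi_power_is_harmonic (n : ℕ) (hn : 0 < n) (p : Heis n) (hp : p ≠ 0) :
    subLap (fun x : Heis n => knorm x ^ (-(2 * n : ℝ))) p = 0 := by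
  have hpos : 0 < Nf n p := Nf_pos p hp
  have hne := hpos.ne'
  set c : ℝ := -((n : ℝ) / 2) with hcdef
  have hfun : (fun x : Heis n => knorm x ^ (-(2 * n : ℝ))) = gfun n c := by
    funext x
    have h0 : (0:ℝ) ≤ Nf n x := Nf_nonneg x
    show (Nf n x ^ (1/4 : ℝ)) ^ (-(2 * n : ℝ)) = Nf n x ^ c
    rw [← Real.rpow_mul h0]
    congr 1
    rw [hcdef]
    ring
  rw [hfun, subLap]
  have key : ∀ k : Fin n,
      Xd k (Xd k (gfun n c)) p + Yd k (Yd k (gfun n c)) p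
        = (16 * c ^ 2 * Nf n p ^ (c - 2) * Nf n p) * (p.1 k ^ 2 + p.2.1 k ^ 2)
          + 8 * c * Nf n p ^ (c - 2) * Nf n p * Sf n p := by
    intro k
    rw [XXval c k p hne, YYval c k p hne]
    rw [show Nf n p = Sf n p ^ 2 + p.2.2 ^ 2 from rfl]
    ring
  rw [Finset.sum_congr rfl fun k _ => key k, Finset.sum_add_distrib,
    ← Finset.mul_sum, Finset.sum_const, Finset.card_univ, Fintype.card_fin,
    nsmul_eq_mul]
  rw [show (∑ k : Fin n, (p.1 k ^ 2 + p.2.1 k ^ 2)) = Sf n p from rfl, hcdef]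
  ring
end

section
/- Key pointwise identity in the proof of the Pohozaev formula: for every C² function u on an open subset of ℝ^{2n+1}, one has ∇^H u · ∇^H(Ξu) = (1/2) Ξ(|∇^H u|²) + |∇^H u|² at every point, i.e. (1/4)∑_{k=1}^n ((X_k u)(X_k(Ξu)) + (Y_k u)(Y_k(Ξu))) = (1/8) Ξ(∑_{k=1}^n ((X_k u)² + (Y_k u)²)) + (1/4)∑_{k=1}^n ((X_k u)² + (Y_k u)²). -/
open scoped BigOperators
open MeasureTheory

noncomputable def TXc (n : ℕ) (k : Fin n) : Heis n →L[ℝ] Heis n :=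
  LinearMap.toContinuousLinearMap
  { toFun := fun v => (0, 0, 2 * v.2.1 k)
    map_add' := fun a b => by simp [Prod.ext_iff]; ring
    map_smul' := fun c a => by simp [Prod.ext_iff]; ring }

noncomputable def TYc (n : ℕ) (k : Fin n) : Heis n →L[ℝ] Heis n :=
  LinearMap.toContinuousLinearMap
  { toFun := fun v => (0, 0, -(2 * v.1 k))
    map_add' := fun a b => by simp [Prod.ext_iff]; ring
    map_smul' := fun c a => by simp [Prod.ext_iff]; ring }

noncomputable def Lxi (n : ℕ) : Heis n →L[ℝ] Heis n :=
  LinearMap.toContinuousLinearMap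
  { toFun := fun v => (v.1, v.2.1, 2 * v.2.2)
    map_add' := fun a b => by simp [Prod.ext_iff]; ring
    map_smul' := fun c a => by simp [Prod.ext_iff]; ring }

lemma TXc_apply {n : ℕ} (k : Fin n) (v : Heis n) : TXc n k v = (0, 0, 2 * v.2.1 k) := rfl
lemma TYc_apply {n : ℕ} (k : Fin n) (v : Heis n) : TYc n k v = (0, 0, -(2 * v.1 k)) := rfl
lemma Lxi_apply {n : ℕ} (v : Heis n) : Lxi n v = XiVec v := rfl

lemma XVec_eq {n : ℕ} (k : Fin n) :
    (fun q : Heis n => XVec k q) = fun q => ((Pi.single k 1, 0, 0) : Heis n) + TXc n k q := by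
  funext q; simp [XVec, TXc_apply, Prod.ext_iff]
lemma YVec_eq {n : ℕ} (k : Fin n) :
    (fun q : Heis n => YVec k q) = fun q => ((0, Pi.single k 1, 0) : Heis n) + TYc n k q := by
  funext q; simp [YVec, TYc_apply, Prod.ext_iff]

lemma key_lin_X {n : ℕ} (k : Fin n) (p : Heis n) :
    Lxi n (XVec k p) = XVec k p + TXc n k (XiVec p) := by
  simp [Lxi_apply, XiVec, XVec, TXc_apply, Prod.ext_iff]; ring
lemma key_lin_Y {n : ℕ} (k : Fin n) (p : Heis n) :
    Lxi n (YVec k p) = YVec k p + TYc n k (XiVec p) := by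
  simp [Lxi_apply, XiVec, YVec, TYc_apply, Prod.ext_iff]; ring

/-- Key pointwise identity in the proof of the Pohozaev formula:
`∇^H u · ∇^H(Ξu) = (1/2) Ξ(|∇^H u|²) + |∇^H u|²` for `C²` functions. -/
theorem pohozaev_pointwise_identity (n : ℕ) (hn : 0 < n)
    (Ω : Set (Heis n)) (hΩ : IsOpen Ω) (u : Heis n → ℝ) (hu : ContDiffOn ℝ 2 u Ω)
    (p : Heis n) (hp : p ∈ Ω) :
    (1 / 4) * ∑ k : Fin n, (Xd k u p * Xd k (Xid u) p + Yd k u p * Yd k (Xid u) p) =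
      (1 / 8) * Xid (fun q => ∑ k : Fin n, ((Xd k u q) ^ 2 + (Yd k u q) ^ 2)) p +
        (1 / 4) * ∑ k : Fin n, ((Xd k u p) ^ 2 + (Yd k u p) ^ 2) := by
  have hcd : ContDiffAt ℝ 2 u p := hu.contDiffAt (hΩ.mem_nhds hp)
  have hdf : DifferentiableAt ℝ (fderiv ℝ u) p :=
    (hcd.fderiv_right (m := 1) le_rfl).differentiableAt one_ne_zero
  have hsym := hcd.isSymmSndFDerivAt (by simp [minSmoothness_of_isRCLikeNormedField])
  set D1 : Heis n →L[ℝ] ℝ := fderiv ℝ u p with hD1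
  set D2 := fderiv ℝ (fderiv ℝ u) p with hD2
  -- derivative of Xid u
  have hXiu : HasFDerivAt (Xid u) (D1.comp (Lxi n) + D2.flip (XiVec p)) p := by
    have : HasFDerivAt (fun q => fderiv ℝ u q (Lxi n q))
        (D1.comp (Lxi n) + D2.flip (Lxi n p)) p :=
      hdf.hasFDerivAt.clm_apply (Lxi n).hasFDerivAt
    exact this
  -- derivatives of Xd k u and Yd k u
  have hXk : ∀ k : Fin n, HasFDerivAt (Xd k u) (D1.comp (TXc n k) + D2.flip (XVec k p)) p := by
    intro k
    have hv : HasFDerivAt (fun q : Heis n => XVec k q) (TXc n k) p := by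
      rw [XVec_eq]
      exact (TXc n k).hasFDerivAt.const_add _
    have := hdf.hasFDerivAt.clm_apply hv
    exact this
  have hYk : ∀ k : Fin n, HasFDerivAt (Yd k u) (D1.comp (TYc n k) + D2.flip (YVec k p)) p := by
    intro k
    have hv : HasFDerivAt (fun q : Heis n => YVec k q) (TYc n k) p := by
      rw [YVec_eq]
      exact (TYc n k).hasFDerivAt.const_add _
    have := hdf.hasFDerivAt.clm_apply hv
    exact this
  -- commutator identities
  have hcommX : ∀ k : Fin n, Xd k (Xid u) p = Xid (Xd k u) p + Xd k u p := by
    intro k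
    have h1 : Xd k (Xid u) p = D1 (Lxi n (XVec k p)) + D2 (XVec k p) (XiVec p) := by
      simp [Xd, hXiu.fderiv]
    have h2 : Xid (Xd k u) p = D1 (TXc n k (XiVec p)) + D2 (XiVec p) (XVec k p) := by
      simp [Xid, (hXk k).fderiv]
    rw [h1, h2, key_lin_X, map_add, hsym (XVec k p) (XiVec p)]
    simp [Xd, hD1]; ring
  have hcommY : ∀ k : Fin n, Yd k (Xid u) p = Xid (Yd k u) p + Yd k u p := by
    intro k
    have h1 : Yd k (Xid u) p = D1 (Lxi n (YVec k p)) + D2 (YVec k p) (XiVec p) := by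
      simp [Yd, hXiu.fderiv]
    have h2 : Xid (Yd k u) p = D1 (TYc n k (XiVec p)) + D2 (XiVec p) (YVec k p) := by
      simp [Xid, (hYk k).fderiv]
    rw [h1, h2, key_lin_Y, map_add, hsym (YVec k p) (XiVec p)]
    simp [Yd, hD1]; ring
  -- derivative of the sum of squares
  have hsum : Xid (fun q => ∑ k : Fin n, ((Xd k u q) ^ 2 + (Yd k u q) ^ 2)) p =
      ∑ k : Fin n, (2 * Xd k u p * Xid (Xd k u) p + 2 * Yd k u p * Xid (Yd k u) p) := by
    have hg : HasFDerivAt (fun q => ∑ k : Fin n, ((Xd k u q) ^ 2 + (Yd k u q) ^ 2))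
        (∑ k : Fin n,
          ((Xd k u p • (D1.comp (TXc n k) + D2.flip (XVec k p))
              + Xd k u p • (D1.comp (TXc n k) + D2.flip (XVec k p)))
            + (Yd k u p • (D1.comp (TYc n k) + D2.flip (YVec k p))
              + Yd k u p • (D1.comp (TYc n k) + D2.flip (YVec k p))))) p := by
      have : (fun q => ∑ k : Fin n, ((Xd k u q) ^ 2 + (Yd k u q) ^ 2)) =
          fun q => ∑ k : Fin n, ((Xd k u q) * (Xd k u q) + (Yd k u q) * (Yd k u q)) := by
        funext q; simp [sq]
      rw [this]
      exact HasFDerivAt.fun_sum fun k _ =>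
        (((hXk k).mul (hXk k)).add ((hYk k).mul (hYk k)))
    rw [Xid, hg.fderiv]
    rw [ContinuousLinearMap.sum_apply]
    refine Finset.sum_congr rfl fun k _ => ?_
    have hx : Xid (Xd k u) p = (D1.comp (TXc n k) + D2.flip (XVec k p)) (XiVec p) := by
      rw [Xid, (hXk k).fderiv]
    have hy : Xid (Yd k u) p = (D1.comp (TYc n k) + D2.flip (YVec k p)) (XiVec p) := by
      rw [Xid, (hYk k).fderiv]
    simp only [ContinuousLinearMap.add_apply, ContinuousLinearMap.smul_apply, smul_eq_mul]
    simp only [ContinuousLinearMap.add_apply] at hx hy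
    rw [hx, hy]; ring
  simp only [hcommX, hcommY, hsum, Finset.mul_sum, ← Finset.sum_add_distrib]
  refine Finset.sum_congr rfl fun k _ => ?_
  ring
end
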